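/- arXiv:2111.10529 — 11 statements merged into one kernel-verified Lean document; each statement's English description precedes it below -/
import Mathlib

section
/- Let (K(x)|K,v) be a valued field extension and c ∈ K. Then there exists c' ∈ K with v(x−c') > v(x−c) if and only if there exists d ∈ K with v(d(x−c)) = 0 and the residue of d(x−c) lies in the residue field Kv. -/
variable {L : Type*} [Field L] {Γ : Type*} [AddCommGroup Γ] [LinearOrder Γ] [IsOrderedAddMonoid Γ]

/-- The residue of `a` (an element of value `0`) lies in the residue field `Kv`:
`a` is congruent, modulo elements of positive value, to an element of `K`. -/
def residueInK (K : Subfield L) (v : AddValuation L (WithTop Γ)) (a : L) : Prop :=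
  ∃ b ∈ K, 0 < v (a - b)

/-! If `v(x - c) < v(x - c')`, then `e = c' - c` has the value of `x - c`, so `(x - c)/e` has
value `0` and residue `1`. Conversely, if `d(x - c)` has value `0` and is congruent to `b ∈ K`,
then `c' = c + b/d` satisfies `d(x - c') = d(x - c) - b`, which has positive value. Both directions
reduce to the fact that multiplying by a nonzero `d` preserves the order of values. -/

namespace AddValuation

variable (v : AddValuation L (WithTop Γ))

theorem map_mul_lt_map_mul_iff {d : L} (hd : d ≠ 0) {a b : L} :
    v (d * a) < v (d * b) ↔ v a < v b := by
  rw [v.map_mul, v.map_mul]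
  exact WithTop.add_lt_add_iff_left ((v.ne_top_iff).mpr hd)

theorem map_inv_mul_self {e : L} (he : e ≠ 0) : v (e⁻¹ * e) = 0 := by
  rw [inv_mul_cancel₀ he, v.map_one]

end AddValuation

section

variable {K : Subfield L} {v : AddValuation L (WithTop Γ)} {x c : L}

theorem exists_residueInK_of_lt {c' : L} (hc : c ∈ K) (hc' : c' ∈ K)
    (hlt : v (x - c) < v (x - c')) :
    ∃ d ∈ K, v (d * (x - c)) = 0 ∧ residueInK K v (d * (x - c)) := by
  have hve : v (c' - c) = v (x - c) := by
    rw [show c' - c = (x - c) - (x - c') by ring, v.map_sub_eq_of_lt_left hlt]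
  have he : c' - c ≠ 0 := by
    rw [← v.ne_top_iff, hve]
    exact (hlt.trans_le le_top).ne
  refine ⟨(c' - c)⁻¹, K.inv_mem (K.sub_mem hc' hc), ?_, 1, K.one_mem, ?_⟩
  · rw [v.map_mul, ← hve, ← v.map_mul, v.map_inv_mul_self he]
  · have hsub : (c' - c)⁻¹ * (x - c) - 1 = (c' - c)⁻¹ * (x - c') := by
      field_simp
      ring
    rw [hsub, ← v.map_inv_mul_self he, v.map_mul_lt_map_mul_iff (inv_ne_zero he), hve]
    exact hlt

theorem exists_lt_of_residueInK (hc : c ∈ K) {d : L} (hd : d ∈ K)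
    (hval : v (d * (x - c)) = 0) (hres : residueInK K v (d * (x - c))) :
    ∃ c' ∈ K, v (x - c) < v (x - c') := by
  obtain ⟨b, hb, hpos⟩ := hres
  have hd0 : d ≠ 0 := by
    rintro rfl
    simp at hval
  refine ⟨c + b / d, K.add_mem hc (K.div_mem hb hd), ?_⟩
  have hsub : d * (x - (c + b / d)) = d * (x - c) - b := by
    field_simp
    ring
  rw [← v.map_mul_lt_map_mul_iff hd0, hsub, hval]
  exact hpos

end

/-- For an extension `(K(x)|K,v)` and `c ∈ K`: there is `c' ∈ K` with
`v(x−c') > v(x−c)` iff there is `d ∈ K` with `v(d(x−c)) = 0` and the residue of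
`d(x−c)` lying in `Kv`. -/
theorem approx_iff_residue_in_K (K : Subfield L) (v : AddValuation L (WithTop Γ))
    (x c : L) (hc : c ∈ K) :
    (∃ c' ∈ K, v (x - c) < v (x - c')) ↔
      ∃ d ∈ K, v (d * (x - c)) = 0 ∧ residueInK K v (d * (x - c)) :=
  ⟨fun ⟨_, hc', hlt⟩ => exists_residueInK_of_lt hc hc' hlt,
    fun ⟨_, hd, hval, hres⟩ => exists_lt_of_residueInK hc hd hval hres⟩
end

section
/- Let (L|K,v) be a valued field extension and x ∈ L. Then: (1) the set v(x−K) ∩ vK is an initial segment of vK; (2) the set v(x−K) \ vK has at most one element; (3) if α ∈ v(x−K) \ vK, then α = max v(x−K) and v(x−K) ∩ vK = {γ ∈ vK : γ < α}. -/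
variable {L : Type*} [Field L] {Γ : Type*} [AddCommGroup Γ] [LinearOrder Γ] [IsOrderedAddMonoid Γ]

/-- The set of values `v(K)` (it contains `∞ = ⊤`, the value of `0`). -/
def valSet (K : Subfield L) (v : AddValuation L (WithTop Γ)) : Set (WithTop Γ) :=
  {g | ∃ c ∈ K, v c = g}

/-- The set `v(x−K) = {v(x−c) : c ∈ K}`. -/
def vxK (K : Subfield L) (v : AddValuation L (WithTop Γ)) (x : L) : Set (WithTop Γ) :=
  {g | ∃ c ∈ K, v (x - c) = g}

section

variable {K : Subfield L} {v : AddValuation L (WithTop Γ)} {x : L}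

/-- If `v e < v (x - c)`, then `v (x - (c + e)) = v e`. -/
theorem mem_vxK_of_le {γ δ : WithTop Γ} (hγ : γ ∈ valSet K v) (hδ : δ ∈ vxK K v x)
    (hle : γ ≤ δ) : γ ∈ vxK K v x := by
  obtain ⟨e, he, rfl⟩ := hγ
  obtain ⟨c, hc, rfl⟩ := hδ
  rcases hle.eq_or_lt with heq | hlt
  · exact ⟨c, hc, heq.symm⟩
  · refine ⟨c + e, K.add_mem hc he, ?_⟩
    rw [show x - (c + e) = (x - c) - e by ring, v.map_sub_eq_of_lt_right hlt]

/-- If `v (x - c) < v (x - d)`, then `v (x - c) = v (c - d)` is a value of `K`. -/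
theorem le_of_mem_vxK_of_notMem_valSet {α β : WithTop Γ} (hα : α ∈ vxK K v x)
    (hαK : α ∉ valSet K v) (hβ : β ∈ vxK K v x) : β ≤ α := by
  obtain ⟨c, hc, rfl⟩ := hα
  obtain ⟨d, hd, rfl⟩ := hβ
  by_contra! hlt
  refine hαK ⟨c - d, K.sub_mem hc hd, ?_⟩
  rw [show c - d = (x - d) - (x - c) by ring, v.map_sub_eq_of_lt_right hlt]

end

/-- (1) `v(x−K) ∩ vK` is an initial segment of `vK`; (2) `v(x−K) \ vK` has at most
one element; (3) if `α ∈ v(x−K) \ vK` then `α = max v(x−K)` and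
`v(x−K) ∩ vK = {γ ∈ vK : γ < α}`. -/
theorem vxK_structure (K : Subfield L) (v : AddValuation L (WithTop Γ)) (x : L) :
    (∀ δ ∈ vxK K v x ∩ valSet K v, ∀ α ∈ valSet K v, α ≤ δ → α ∈ vxK K v x ∩ valSet K v) ∧
    (vxK K v x \ valSet K v).Subsingleton ∧
    (∀ α ∈ vxK K v x \ valSet K v,
      (∀ β ∈ vxK K v x, β ≤ α) ∧
      vxK K v x ∩ valSet K v = {γ | γ ∈ valSet K v ∧ γ < α}) := by
  refine ⟨fun δ hδ α hα hle => ⟨mem_vxK_of_le hα hδ.1 hle, hα⟩, ?_, ?_⟩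
  · intro a ha b hb
    exact le_antisymm (le_of_mem_vxK_of_notMem_valSet hb.1 hb.2 ha.1)
      (le_of_mem_vxK_of_notMem_valSet ha.1 ha.2 hb.1)
  · rintro α ⟨hα, hαK⟩
    have hmax := fun β => le_of_mem_vxK_of_notMem_valSet (β := β) hα hαK
    refine ⟨hmax, Set.ext fun γ => ⟨?_, ?_⟩⟩
    · rintro ⟨hγ, hγK⟩
      exact ⟨hγK, (hmax γ hγ).lt_of_ne (ne_of_mem_of_not_mem hγK hαK)⟩
    · rintro ⟨hγK, hlt⟩
      exact ⟨mem_vxK_of_le hγK hα hlt.le, hγK⟩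
end

section
/- Let (L|K,v) be a valued field extension and x ∈ L. Then v(x−c) = max v(x−K) if and only if v(x−c) ∉ vK or for every d ∈ K with v(d(x−c)) = 0 the residue of d(x−c) does not lie in Kv. -/
/-! If `v(x - c) < v(x - c')` for some `c' ∈ K`, then `b := c' - c ∈ K` has the value of `x - c`
and `b⁻¹(x - c)` is a unit whose residue is that of `1`. Conversely, if `d(x - c)` is a unit whose
residue is that of some `b ∈ K`, then `c + b / d` approximates `x` strictly better than `c`. -/

variable {L : Type*} [Field L] {Γ : Type*} [AddCommGroup Γ] [LinearOrder Γ] [IsOrderedAddMonoid Γ]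

theorem AddValuation.map_mul_lt_map_mul_iff_s3 (v : AddValuation L (WithTop Γ)) {d : L} (hd : d ≠ 0)
    {y z : L} : v (d * y) < v (d * z) ↔ v y < v z := by
  rw [v.map_mul, v.map_mul, WithTop.add_lt_add_iff_left ((v.ne_top_iff).mpr hd)]

section

variable {K : Subfield L} {v : AddValuation L (WithTop Γ)} {y b : L}

theorem forall_vxK_le_iff {x c : L} (hc : c ∈ K) :
    (∀ β ∈ vxK K v x, β ≤ v (x - c)) ↔ ∀ b ∈ K, v (x - c - b) ≤ v (x - c) := by
  constructor
  · intro h b hb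
    exact h _ ⟨c + b, K.add_mem hc hb, by rw [sub_sub]⟩
  · rintro h _ ⟨c', hc', rfl⟩
    simpa only [sub_sub_sub_cancel_right] using h (c' - c) (K.sub_mem hc' hc)

theorem map_mem_valSet_of_lt_map_sub (hb : b ∈ K) (h : v y < v (y - b)) : v y ∈ valSet K v :=
  ⟨b, hb, by simpa only [sub_sub_cancel] using v.map_sub_eq_of_lt_left h⟩

theorem exists_residueInK_of_lt_map_sub (hb : b ∈ K) (h : v y < v (y - b)) :
    ∃ d ∈ K, v (d * y) = 0 ∧ residueInK K v (d * y) := by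
  have hvb : v b = v y := by simpa only [sub_sub_cancel] using v.map_sub_eq_of_lt_left h
  have hb0 : b ≠ 0 := by
    rintro rfl
    exact h.ne (by rw [sub_zero])
  have hunit : v (b⁻¹ * y) = 0 := by
    rw [v.map_mul, ← hvb, ← v.map_mul, inv_mul_cancel₀ hb0, v.map_one]
  refine ⟨b⁻¹, K.inv_mem hb, hunit, 1, K.one_mem, ?_⟩
  have hsub : b⁻¹ * y - 1 = b⁻¹ * (y - b) := by field_simp
  rw [hsub, ← hunit, v.map_mul_lt_map_mul_iff_s3 (inv_ne_zero hb0)]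
  exact h

theorem exists_lt_map_sub_of_residueInK {d : L} (hd : d ∈ K) (hunit : v (d * y) = 0)
    (hres : residueInK K v (d * y)) : ∃ b ∈ K, v y < v (y - b) := by
  obtain ⟨b, hb, hlt⟩ := hres
  have hd0 : d ≠ 0 := by
    rintro rfl
    simp at hunit
  refine ⟨b / d, K.div_mem hb hd, ?_⟩
  have hsub : d * y - b = d * (y - b / d) := by field_simp
  rwa [← hunit, hsub, v.map_mul_lt_map_mul_iff_s3 hd0] at hlt

end

/-- `v(x−c) = max v(x−K)` iff `v(x−c) ∉ vK` or for every `d ∈ K` with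
`v(d(x−c)) = 0` the residue of `d(x−c)` does not lie in `Kv`. -/
theorem max_vxK_iff (K : Subfield L) (v : AddValuation L (WithTop Γ)) (x c : L) (hc : c ∈ K) :
    (∀ β ∈ vxK K v x, β ≤ v (x - c)) ↔
      (v (x - c) ∉ valSet K v ∨
        ∀ d ∈ K, v (d * (x - c)) = 0 → ¬ residueInK K v (d * (x - c))) := by
  rw [forall_vxK_le_iff hc]
  constructor
  · intro hmax
    right
    intro d hd hunit hres
    obtain ⟨b, hb, hlt⟩ := exists_lt_map_sub_of_residueInK hd hunit hres
    exact (hmax b hb).not_gt hlt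
  · rintro (hval | hres) b hb <;> by_contra! hlt
    · exact hval (map_mem_valSet_of_lt_map_sub hb hlt)
    · obtain ⟨d, hd, hunit, hresK⟩ := exists_residueInK_of_lt_map_sub hb hlt
      exact hres d hd hunit hresK
end

section
/- Let (L|K,v) be a valued field extension and x ∈ L such that v(x−K) has no maximal element. Then the following are equivalent for y ∈ L: (a) v(x−y) > γ for all γ ∈ v(x−K); (b) v(x−y) ≥ γ for all γ ∈ v(x−K); (c) v(x−c) = v(y−c) for all c ∈ K. -/
variable {L : Type*} [Field L] {Γ : Type*} [AddCommGroup Γ] [LinearOrder Γ] [IsOrderedAddMonoid Γ]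

theorem forall_lt_of_forall_le_of_forall_exists_gt {ι α : Type*} [Preorder α] {p : ι → Prop}
    {f : ι → α} {a : α} (hnomax : ∀ i, p i → ∃ j, p j ∧ f i < f j) (hle : ∀ i, p i → f i ≤ a) :
    ∀ i, p i → f i < a := fun i hi ↦
  let ⟨j, hj, hij⟩ := hnomax i hi
  hij.trans_le (hle j hj)

namespace AddValuation

variable {R Γ₀ : Type*} [Ring R] [LinearOrderedAddCommMonoidWithTop Γ₀] (v : AddValuation R Γ₀)
  {x y c : R}

theorem map_sub_eq_of_lt_map_sub (h : v (x - c) < v (x - y)) : v (y - c) = v (x - c) :=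
  v.map_eq_of_lt_sub (by rwa [sub_sub_sub_cancel_right, v.map_sub_swap y x])

theorem map_sub_le_of_map_sub_eq (h : v (x - c) = v (y - c)) : v (x - c) ≤ v (x - y) := by
  simpa only [sub_sub_sub_cancel_right] using v.map_le_sub le_rfl h.le

end AddValuation

/-- If `v(x−K)` has no maximal element, then the following are equivalent:
(a) `v(x−y) > γ` for all `γ ∈ v(x−K)`; (b) `v(x−y) ≥ γ` for all `γ ∈ v(x−K)`;
(c) `v(x−c) = v(y−c)` for all `c ∈ K`. -/
theorem no_max_tfae (K : Subfield L) (v : AddValuation L (WithTop Γ)) (x y : L)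
    (hnomax : ∀ c ∈ K, ∃ c' ∈ K, v (x - c) < v (x - c')) :
    ((∀ c ∈ K, v (x - c) < v (x - y)) ↔ (∀ c ∈ K, v (x - c) ≤ v (x - y))) ∧
    ((∀ c ∈ K, v (x - c) ≤ v (x - y)) ↔ (∀ c ∈ K, v (x - c) = v (y - c))) := by
  have lt_of_le : (∀ c ∈ K, v (x - c) ≤ v (x - y)) → ∀ c ∈ K, v (x - c) < v (x - y) :=
    forall_lt_of_forall_le_of_forall_exists_gt hnomax
  refine ⟨⟨fun hlt c hc ↦ (hlt c hc).le, lt_of_le⟩, ⟨fun hle c hc ↦ ?_, fun heq c hc ↦ ?_⟩⟩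
  · exact (v.map_sub_eq_of_lt_map_sub (lt_of_le hle c hc)).symm
  · exact v.map_sub_le_of_map_sub_eq (heq c hc)
end

section
/- Let Γ be an ordered abelian group and α an element of an ordered abelian group extension with α ∉ Γ. If Γ is divisible, or α > γ for all γ ∈ Γ, or α < γ for all γ ∈ Γ, then the ordering on the group Γ ⊕ ℤα is uniquely determined by the cut that α induces in Γ (i.e., by the sets {γ ∈ Γ : γ < α} and {γ ∈ Γ : γ > α}). -/
/-!
For `n > 0`, divisibility writes `γ + n • α = n • (α - δ)` with `n • δ = -γ`, so the sign of
`γ + n • α` is that of `α - δ`, which the cut decides. If instead `α` lies above (below) all of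
`Γ`, then `γ + n • α` is positive (negative) for every `n > 0`, and `α'` lies on the same side.
Negative `n` reduce to positive ones by replacing `α`, `α'` with `-α`, `-α'`.
-/

section

variable {Γ G G' : Type*} [AddCommGroup Γ] [AddCommGroup G] [AddCommGroup G']

theorem add_nsmul_eq_nsmul_sub {f : Γ →+ G} (α : G) {γ δ : Γ} {n : ℕ} (hδ : n • δ = -γ) :
    f γ + n • α = n • (α - f δ) := by
  rw [nsmul_sub, ← map_nsmul, hδ, map_neg]
  abel

def SameCut [LT G] [LT G'] (f : Γ →+ G) (f' : Γ →+ G') (α : G) (α' : G') : Prop :=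
  ∀ γ : Γ, (f γ < α ↔ f' γ < α') ∧ (α < f γ ↔ α' < f' γ)

variable [LinearOrder G] [IsOrderedAddMonoid G] [LinearOrder G'] [IsOrderedAddMonoid G']

theorem map_lt_neg_iff (f : Γ →+ G) (α : G) (γ : Γ) : f γ < -α ↔ α < f (-γ) := by
  rw [map_neg, lt_neg]

theorem neg_lt_map_iff (f : Γ →+ G) (α : G) (γ : Γ) : -α < f γ ↔ f (-γ) < α := by
  rw [map_neg, neg_lt]

theorem SameCut.neg {f : Γ →+ G} {f' : Γ →+ G'} {α : G} {α' : G'} (h : SameCut f f' α α') :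
    SameCut f f' (-α) (-α') := fun γ => by
  simp only [map_lt_neg_iff, neg_lt_map_iff]
  exact ⟨(h (-γ)).2, (h (-γ)).1⟩

theorem forall_map_lt_neg_iff (f : Γ →+ G) (α : G) :
    (∀ γ, f γ < -α) ↔ ∀ γ, α < f γ := by
  simp only [map_lt_neg_iff]
  exact (neg_surjective.forall (p := fun γ => α < f γ)).symm

theorem forall_neg_lt_map_iff (f : Γ →+ G) (α : G) :
    (∀ γ, -α < f γ) ↔ ∀ γ, f γ < α := by
  simp only [neg_lt_map_iff]
  exact (neg_surjective.forall (p := fun γ => f γ < α)).symm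

theorem add_nsmul_pos_of_forall_map_lt {f : Γ →+ G} {α : G} (hα : ∀ γ, f γ < α)
    (γ : Γ) {n : ℕ} (hn : n ≠ 0) : 0 < f γ + n • α := by
  have hα₀ : 0 < α := map_zero f ▸ hα 0
  have : -f γ < n • α := calc
    -f γ = f (-γ) := (map_neg f γ).symm
    _ < α := hα (-γ)
    _ ≤ n • α := le_self_nsmul hα₀.le hn
  rwa [neg_lt_iff_pos_add'] at this

theorem add_nsmul_neg_of_forall_lt_map {f : Γ →+ G} {α : G} (hα : ∀ γ, α < f γ)
    (γ : Γ) {n : ℕ} (hn : n ≠ 0) : f γ + n • α < 0 := by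
  have := add_nsmul_pos_of_forall_map_lt ((forall_map_lt_neg_iff f α).2 hα) (-γ) hn
  rwa [map_neg, smul_neg, ← neg_add, neg_pos] at this

theorem pos_add_nsmul_iff_of_sameCut {f : Γ →+ G} {f' : Γ →+ G'} {α : G} {α' : G'}
    (hcase : (∀ n : ℕ, n ≠ 0 → ∀ γ : Γ, ∃ δ : Γ, n • δ = γ) ∨
      (∀ γ : Γ, f γ < α) ∨ (∀ γ : Γ, α < f γ))
    (hcut : SameCut f f' α α') (γ : Γ) {n : ℕ} (hn : n ≠ 0) :
    0 < f γ + n • α ↔ 0 < f' γ + n • α' := by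
  rcases hcase with hdiv | hbig | hsmall
  · obtain ⟨δ, hδ⟩ := hdiv n hn (-γ)
    rw [add_nsmul_eq_nsmul_sub α hδ, add_nsmul_eq_nsmul_sub α' hδ, nsmul_pos_iff hn,
      nsmul_pos_iff hn, sub_pos, sub_pos]
    exact (hcut δ).1
  · exact iff_of_true (add_nsmul_pos_of_forall_map_lt hbig γ hn)
      (add_nsmul_pos_of_forall_map_lt (fun δ => (hcut δ).1.1 (hbig δ)) γ hn)
  · exact iff_of_false (add_nsmul_neg_of_forall_lt_map hsmall γ hn).not_gt
      (add_nsmul_neg_of_forall_lt_map (fun δ => (hcut δ).2.1 (hsmall δ)) γ hn).not_gt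

end

theorem cut_determines_order_general {Γ G G' : Type*} [AddCommGroup Γ] [LinearOrder Γ] [IsOrderedAddMonoid Γ]
    [AddCommGroup G] [LinearOrder G] [IsOrderedAddMonoid G]
    [AddCommGroup G'] [LinearOrder G'] [IsOrderedAddMonoid G']
    (f : Γ →+ G) (f' : Γ →+ G') (hf : StrictMono f) (hf' : StrictMono f')
    (α : G) (α' : G')
    (hcase : (∀ n : ℕ, n ≠ 0 → ∀ γ : Γ, ∃ δ : Γ, n • δ = γ) ∨
      (∀ γ : Γ, f γ < α) ∨ (∀ γ : Γ, α < f γ))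
    (hcut₁ : ∀ γ : Γ, f γ < α ↔ f' γ < α')
    (hcut₂ : ∀ γ : Γ, α < f γ ↔ α' < f' γ) :
    ∀ (γ : Γ) (n : ℤ), 0 < f γ + n • α ↔ 0 < f' γ + n • α' := by
  have hcut : SameCut f f' α α' := fun γ => ⟨hcut₁ γ, hcut₂ γ⟩
  have hcase_neg : (∀ n : ℕ, n ≠ 0 → ∀ γ : Γ, ∃ δ : Γ, n • δ = γ) ∨
      (∀ γ : Γ, f γ < -α) ∨ (∀ γ : Γ, -α < f γ) :=
    hcase.imp_right fun h =>
      h.symm.imp (forall_map_lt_neg_iff f α).2 (forall_neg_lt_map_iff f α).2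
  intro γ n
  rcases eq_or_ne n 0 with rfl | hn
  · rw [zero_smul, zero_smul, add_zero, add_zero, ← map_zero f, ← map_zero f',
      hf.lt_iff_lt, hf'.lt_iff_lt]
  obtain ⟨m, rfl | rfl⟩ := Int.eq_nat_or_neg n
  · simpa only [natCast_zsmul] using
      pos_add_nsmul_iff_of_sameCut hcase hcut γ (n := m) (by simpa using hn)
  · simpa only [neg_smul, natCast_zsmul, ← smul_neg] using
      pos_add_nsmul_iff_of_sameCut hcase_neg hcut.neg γ (n := m) (by simpa using hn)

/-- Let `Γ` be an ordered abelian group, embedded (order-preservingly) in two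
ordered abelian groups `G`, `G'` via `f`, `f'`, and let `α ∈ G`, `α' ∈ G'` with
`α ∉ Γ`, `α' ∉ Γ`. If `Γ` is divisible, or `α > Γ`, or `α < Γ`, and if `α` and
`α'` induce the same cut in `Γ`, then the orderings on `Γ ⊕ ℤα` and `Γ ⊕ ℤα'`
agree: an element `γ + nα` is positive iff `γ + nα'` is. -/
theorem cut_determines_order {Γ G G' : Type*} [AddCommGroup Γ] [LinearOrder Γ] [IsOrderedAddMonoid Γ]
    [AddCommGroup G] [LinearOrder G] [IsOrderedAddMonoid G]
    [AddCommGroup G'] [LinearOrder G'] [IsOrderedAddMonoid G']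
    (f : Γ →+ G) (f' : Γ →+ G') (hf : StrictMono f) (hf' : StrictMono f')
    (α : G) (α' : G') (hα : α ∉ Set.range f) (hα' : α' ∉ Set.range f')
    (hcase : (∀ n : ℕ, n ≠ 0 → ∀ γ : Γ, ∃ δ : Γ, n • δ = γ) ∨
      (∀ γ : Γ, f γ < α) ∨ (∀ γ : Γ, α < f γ))
    (hcut₁ : ∀ γ : Γ, f γ < α ↔ f' γ < α')
    (hcut₂ : ∀ γ : Γ, α < f γ ↔ α' < f' γ) :
    ∀ (γ : Γ) (n : ℤ), 0 < f γ + n • α ↔ 0 < f' γ + n • α' :=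
  cut_determines_order_general f f' hf hf' α α' hcase hcut₁ hcut₂
end

section
/- Let (L|K,v) be a valued field extension and x, x' ∈ L. If appr_v(x,K) = appr_v(x',K) then v(x−x') ≥ γ for all γ in supp appr_v(x,K). Conversely, if v(x−x') > γ for all γ in supp appr_v(x,K) ∪ supp appr_v(x',K), or if v(x−x') ∈ vK and v(x−x') > γ for all γ ∈ supp appr_v(x,K), then appr_v(x,K) = appr_v(x',K). -/
/-!
By the ultrametric inequality, `γ ≤ v (x - x')` (resp. `γ < v (x - x')`) puts `x` and `x'` in the
same closed (resp. open) balls of radius `γ`; this gives the first two criteria directly. For the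
third, `δ = v (x - x') ∈ vK` is not in the support of `appr_v(x,K)`, and then no `c ∈ K` satisfies
`δ ≤ v (x' - c)` either (it would give `δ ≤ v (x - c)`), so `δ` also exceeds the support of
`appr_v(x',K)` and the second criterion applies.
-/

variable {L : Type*} [Field L] {Γ : Type*} [AddCommGroup Γ] [LinearOrder Γ] [IsOrderedAddMonoid Γ]

def suppAppr (K : Subfield L) (v : AddValuation L (WithTop Γ)) (x : L) : Set (WithTop Γ) :=
  {γ | γ ∈ valSet K v ∧ ∃ c ∈ K, γ ≤ v (x - c)}

/-- Equality of the approximation types of `x` and `x'` over `K`: the closed and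
open balls agree at every radius `γ ∈ vK∪{∞}`. -/
def apprEq (K : Subfield L) (v : AddValuation L (WithTop Γ)) (x x' : L) : Prop :=
  ∀ γ ∈ valSet K v,
    {c : L | c ∈ K ∧ γ ≤ v (x - c)} = {c : L | c ∈ K ∧ γ ≤ v (x' - c)} ∧
    {c : L | c ∈ K ∧ γ < v (x - c)} = {c : L | c ∈ K ∧ γ < v (x' - c)}

namespace AddValuation

variable {R Γ₀ : Type*} [Ring R] [LinearOrderedAddCommMonoidWithTop Γ₀] (v : AddValuation R Γ₀)
  {a b c : R} {γ : Γ₀}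

theorem le_map_sub_trans (hab : γ ≤ v (a - b)) (hbc : γ ≤ v (b - c)) : γ ≤ v (a - c) := by
  simpa only [sub_add_sub_cancel] using v.map_le_add hab hbc

theorem lt_map_sub_trans (hab : γ < v (a - b)) (hbc : γ < v (b - c)) : γ < v (a - c) := by
  simpa only [sub_add_sub_cancel] using v.map_lt_add hab hbc

theorem le_map_sub_iff_of_le (hab : γ ≤ v (a - b)) : γ ≤ v (a - c) ↔ γ ≤ v (b - c) :=
  ⟨v.le_map_sub_trans (v.map_sub_swap a b ▸ hab), v.le_map_sub_trans hab⟩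

theorem lt_map_sub_iff_of_lt (hab : γ < v (a - b)) : γ < v (a - c) ↔ γ < v (b - c) :=
  ⟨v.lt_map_sub_trans (v.map_sub_swap a b ▸ hab), v.lt_map_sub_trans hab⟩

end AddValuation

section ApproximationType

variable {K : Subfield L} {v : AddValuation L (WithTop Γ)} {x x' : L}

theorem le_map_sub_of_apprEq (h : apprEq K v x x') :
    ∀ γ ∈ suppAppr K v x, γ ≤ v (x - x') := by
  rintro γ ⟨hγ, c, hc, hxc⟩
  have hx'c : γ ≤ v (x' - c) := ((Set.ext_iff.mp (h γ hγ).1 c).mp ⟨hc, hxc⟩).2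
  exact v.le_map_sub_trans hxc (v.map_sub_swap x' c ▸ hx'c)

theorem apprEq_of_forall_lt_map_sub
    (h : ∀ γ ∈ suppAppr K v x ∪ suppAppr K v x', γ < v (x - x')) : apprEq K v x x' := by
  intro γ hγ
  have balls : ∀ c ∈ K,
      (γ ≤ v (x - c) ↔ γ ≤ v (x' - c)) ∧ (γ < v (x - c) ↔ γ < v (x' - c)) := by
    intro c hc
    by_cases hmem : γ ≤ v (x - c) ∨ γ ≤ v (x' - c)
    · have hlt := h γ (hmem.imp (fun h ↦ ⟨hγ, c, hc, h⟩) (fun h ↦ ⟨hγ, c, hc, h⟩))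
      exact ⟨v.le_map_sub_iff_of_le hlt.le, v.lt_map_sub_iff_of_lt hlt⟩
    · obtain ⟨hx, hx'⟩ := not_or.mp hmem
      exact ⟨iff_of_false hx hx', iff_of_false (fun h ↦ hx h.le) (fun h ↦ hx' h.le)⟩
  exact ⟨Set.ext fun c ↦ and_congr_right fun hc ↦ (balls c hc).1,
    Set.ext fun c ↦ and_congr_right fun hc ↦ (balls c hc).2⟩

theorem lt_map_sub_of_map_sub_notMem_suppAppr (hδ : v (x - x') ∈ valSet K v)
    (hx : v (x - x') ∉ suppAppr K v x) : ∀ γ ∈ suppAppr K v x', γ < v (x - x') := by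
  rintro γ ⟨-, c, hc, hγc⟩
  by_contra! hle
  exact hx ⟨hδ, c, hc, v.le_map_sub_trans le_rfl (hle.trans hγc)⟩

end ApproximationType

/-- If `appr_v(x,K) = appr_v(x',K)` then `v(x−x') ≥ supp appr_v(x,K)`.
Conversely, if `v(x−x') > supp appr_v(x,K) ∪ supp appr_v(x',K)`, or if
`v(x−x') ∈ vK` and `v(x−x') > supp appr_v(x,K)`, then the approximation types
are equal. -/
theorem apprEq_criteria (K : Subfield L) (v : AddValuation L (WithTop Γ)) (x x' : L) :
    (apprEq K v x x' → ∀ γ ∈ suppAppr K v x, γ ≤ v (x - x')) ∧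
    ((∀ γ ∈ suppAppr K v x ∪ suppAppr K v x', γ < v (x - x')) → apprEq K v x x') ∧
    ((v (x - x') ∈ valSet K v ∧ ∀ γ ∈ suppAppr K v x, γ < v (x - x')) →
      apprEq K v x x') := by
  refine ⟨le_map_sub_of_apprEq, apprEq_of_forall_lt_map_sub, ?_⟩
  rintro ⟨hδ, hlt⟩
  have hδx : v (x - x') ∉ suppAppr K v x := fun hmem ↦ (hlt _ hmem).false
  exact apprEq_of_forall_lt_map_sub fun γ hγ ↦
    hγ.elim (hlt γ) (lt_map_sub_of_map_sub_notMem_suppAppr hδ hδx γ)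
end

section
/- A valued field extension (L|K,v) is immediate if and only if for every x ∈ L \ K the approximation type appr_v(x,K) is immediate. -/
variable {L : Type*} [Field L] {Γ : Type*} [AddCommGroup Γ] [LinearOrder Γ] [IsOrderedAddMonoid Γ]

def IsImmediateExt (K : Subfield L) (v : AddValuation L (WithTop Γ)) : Prop :=
  (∀ y : L, y ≠ 0 → ∃ c ∈ K, v c = v y) ∧
  (∀ y : L, v y = 0 → ∃ c ∈ K, 0 < v (y - c))

def ImmediateAppr (K : Subfield L) (v : AddValuation L (WithTop Γ)) (x : L) : Prop :=
  (suppAppr K v x).Nonempty ∧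
    (⋂ γ ∈ suppAppr K v x, {c : L | c ∈ K ∧ γ ≤ v (x - c)}) = ∅

/-! Both sides are equivalent to: every `y ∈ L \ K` has some `c ∈ K` with `v y < v (y - c)`.
In an immediate extension such a `c` is found by matching first the value of `y`, then the
residue of the resulting unit; conversely such a `c` has `v c = v y`, and the same residue when
`y` is a unit. Applied to `x - c` for all `c ∈ K`, the criterion says that `x` has no best
approximation in `K`, which is immediacy of `appr_v(x,K)`; and `0` lying outside the
intersection defining `appr_v(y,K)` gives the criterion back. -/

section

variable {K : Subfield L} {v : AddValuation L (WithTop Γ)}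

theorem IsImmediateExt.exists_lt_map_sub (hK : IsImmediateExt K v) {y : L} (hy : y ≠ 0) :
    ∃ c ∈ K, v y < v (y - c) := by
  obtain ⟨a, haK, hay⟩ := hK.1 y hy
  have hvy : v y ≠ ⊤ := v.ne_top_iff.2 hy
  have ha : a ≠ 0 := v.ne_top_iff.1 (hay ▸ hvy)
  obtain ⟨b, hbK, hb⟩ := hK.2 (y / a) <| by
    rw [v.map_div, hay, LinearOrderedAddCommGroupWithTop.sub_self_eq_zero_of_ne_top hvy]
  refine ⟨a * b, K.mul_mem haK hbK, ?_⟩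
  have hsplit : y - a * b = a * (y / a - b) := by field_simp
  calc v y = v a + 0 := by rw [add_zero, hay]
    _ < v a + v (y / a - b) := WithTop.add_lt_add_left (v.ne_top_iff.2 ha) hb
    _ = v (y - a * b) := by rw [hsplit, v.map_mul]

theorem IsImmediateExt.of_forall_exists_lt_map_sub
    (h : ∀ y ∉ K, ∃ c ∈ K, v y < v (y - c)) : IsImmediateExt K v := by
  refine ⟨fun y _ => ?_, fun y hy => ?_⟩
  · by_cases hyK : y ∈ K
    · exact ⟨y, hyK, rfl⟩
    obtain ⟨c, hcK, hc⟩ := h y hyK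
    exact ⟨c, hcK, v.map_eq_of_lt_sub (by rwa [v.map_sub_swap])⟩
  · by_cases hyK : y ∈ K
    · exact ⟨y, hyK, by simp⟩
    obtain ⟨c, hcK, hc⟩ := h y hyK
    exact ⟨c, hcK, hy ▸ hc⟩

theorem ImmediateAppr.exists_lt_map_sub {x c : L} (hx : ImmediateAppr K v x) (hc : c ∈ K) :
    ∃ c' ∈ K, v (x - c) < v (x - c') := by
  have hnotMem : c ∉ ⋂ γ ∈ suppAppr K v x, {c : L | c ∈ K ∧ γ ≤ v (x - c)} := by
    rw [hx.2]
    exact Set.notMem_empty c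
  simp only [Set.mem_iInter, Set.mem_ofPred_eq, not_forall] at hnotMem
  obtain ⟨γ, ⟨-, c', hc'K, hγ⟩, hcγ⟩ := hnotMem
  exact ⟨c', hc'K, (not_le.1 fun h => hcγ ⟨hc, h⟩).trans_le hγ⟩

theorem immediateAppr_of_forall_exists_lt_map_sub {x : L}
    (hval : ∀ y : L, y ≠ 0 → ∃ c ∈ K, v c = v y) (hx : x ∉ K)
    (h : ∀ c ∈ K, ∃ c' ∈ K, v (x - c) < v (x - c')) : ImmediateAppr K v x := by
  have hmem : ∀ c ∈ K, v (x - c) ∈ suppAppr K v x := fun c hc =>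
    ⟨hval _ (sub_ne_zero.2 fun h => hx (h ▸ hc)), c, hc, le_rfl⟩
  refine ⟨⟨_, hmem 0 K.zero_mem⟩, Set.eq_empty_iff_forall_notMem.2 fun c hc => ?_⟩
  simp only [Set.mem_iInter, Set.mem_ofPred_eq] at hc
  obtain ⟨c', hc'K, hlt⟩ := h c (hc _ (hmem 0 K.zero_mem)).1
  exact not_le.2 hlt (hc _ (hmem c' hc'K)).2

end

/-- `(L|K,v)` is immediate iff `appr_v(x,K)` is immediate for every
`x ∈ L \ K`. -/
theorem immediateExt_iff_immediateAppr (K : Subfield L)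
    (v : AddValuation L (WithTop Γ)) :
    IsImmediateExt K v ↔ ∀ x : L, x ∉ K → ImmediateAppr K v x := by
  refine ⟨fun hK x hx => ?_, fun h => ?_⟩
  · refine immediateAppr_of_forall_exists_lt_map_sub hK.1 hx fun c hc => ?_
    have hxc : x - c ≠ 0 := sub_ne_zero.2 fun h => hx (h ▸ hc)
    obtain ⟨d, hdK, hd⟩ := hK.exists_lt_map_sub hxc
    exact ⟨c + d, K.add_mem hc hdK, by rwa [← sub_sub]⟩
  · refine IsImmediateExt.of_forall_exists_lt_map_sub fun y hy => ?_
    simpa using (h y hy).exists_lt_map_sub K.zero_mem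
end

section
/- Let α_1, …, α_m be elements of an ordered abelian group Γ, let Υ ⊂ Γ be a subset without a maximal element, and let t_1, …, t_m be distinct integers. Then there exist β ∈ Υ and a permutation σ of {1,…,m} such that for all γ ∈ Υ with γ ≥ β: α_{σ(1)} + t_{σ(1)}γ > α_{σ(2)} + t_{σ(2)}γ > ⋯ > α_{σ(m)} + t_{σ(m)}γ. -/
/-!
Two affine functions `γ ↦ a + m • γ` with distinct integer slopes differ by a strictly monotone
(or antitone) function, so along `Υ`, which has no maximum, their order eventually stabilises:
once the difference has become nonnegative it stays positive one step later. With finitely many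
pairs there is a common threshold `β ∈ Υ` beyond which all comparisons are frozen; at `β` the
values are pairwise distinct, and `σ` sorts them decreasingly.
-/

open Filter

theorem StrictMono.eventually_lt_or_eventually_gt {X Y : Type*} [Preorder X] [NoMaxOrder X]
    [LinearOrder Y] {f : X → Y} (hf : StrictMono f) (c : Y) :
    (∀ᶠ x in atTop, c < f x) ∨ ∀ᶠ x in atTop, f x < c := by
  by_cases h : ∃ x, c ≤ f x
  · obtain ⟨x, hx⟩ := h
    obtain ⟨y, hxy⟩ := exists_gt x
    exact Or.inl <| (eventually_ge_atTop y).mono fun z hyz =>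
      hx.trans_lt (hf (hxy.trans_le hyz))
  · push Not at h
    exact Or.inr (Eventually.of_forall h)

theorem eventually_lt_or_eventually_gt_of_slope_ne {X Γ : Type*} [Preorder X] [NoMaxOrder X]
    [AddCommGroup Γ] [LinearOrder Γ] [IsOrderedAddMonoid Γ] {f : X → Γ} (hf : StrictMono f)
    (a b : Γ) {m n : ℤ} (hmn : m ≠ n) :
    (∀ᶠ x in atTop, a + m • f x < b + n • f x) ∨ ∀ᶠ x in atTop, b + n • f x < a + m • f x := by
  wlog hlt : n < m generalizing a b m n
  · exact (this b a hmn.symm (hmn.lt_or_gt.resolve_right hlt)).symm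
  have hlt_iff : ∀ x, a + m • f x < b + n • f x ↔ a + (m - n) • f x < b := fun x => by
    rw [sub_smul, ← add_sub_assoc, sub_lt_iff_lt_add]
  have hgt_iff : ∀ x, b + n • f x < a + m • f x ↔ b < a + (m - n) • f x := fun x => by
    rw [sub_smul, ← add_sub_assoc, lt_sub_iff_add_lt, add_comm b]
  have hmono : StrictMono fun x => a + (m - n) • f x :=
    fun x y hxy => add_lt_add_right (zsmul_lt_zsmul_right (sub_pos.mpr hlt) (hf hxy)) a
  simp only [hlt_iff, hgt_iff]
  exact (hmono.eventually_lt_or_eventually_gt b).symm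

theorem Fin.exists_perm_strictAnti_comp {Y : Type*} [LinearOrder Y] {m : ℕ} {w : Fin m → Y}
    (hw : Function.Injective w) : ∃ σ : Equiv.Perm (Fin m), StrictAnti (w ∘ σ) := by
  let σ := Tuple.sort (OrderDual.toDual ∘ w)
  have hsorted : StrictMono (OrderDual.toDual ∘ w ∘ σ) :=
    (Tuple.monotone_sort _).strictMono_of_injective <|
      (OrderDual.toDual.injective.comp hw).comp σ.injective
  exact ⟨σ, strictMono_toDual_comp_iff.mp hsorted⟩

theorem exists_perm_forall_ge_strictAnti {X Y : Type*} [Preorder X] [IsDirected X (· ≤ ·)]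
    [Nonempty X] [LinearOrder Y] {m : ℕ} (v : Fin m → X → Y)
    (hv : ∀ i j, i ≠ j → (∀ᶠ x in atTop, v i x < v j x) ∨ ∀ᶠ x in atTop, v j x < v i x) :
    ∃ β, ∃ σ : Equiv.Perm (Fin m), ∀ γ, β ≤ γ → StrictAnti fun i => v (σ i) γ := by
  have hfrozen : ∀ᶠ x in atTop, ∀ i j, (∀ᶠ y in atTop, v j y < v i y) → v j x < v i x :=
    eventually_all.2 fun i => eventually_all.2 fun j => eventually_imp_distrib_left.2 id
  obtain ⟨β, hβ⟩ := eventually_atTop.mp hfrozen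
  have hinj : Function.Injective fun i => v i β := fun i j hij => by
    by_contra hne
    rcases hv i j hne with h | h
    · exact (hβ β le_rfl j i h).ne hij
    · exact (hβ β le_rfl i j h).ne' hij
  obtain ⟨σ, hσ⟩ := Fin.exists_perm_strictAnti_comp hinj
  refine ⟨β, σ, fun γ hβγ i j hij => ?_⟩
  have hβ_lt : v (σ j) β < v (σ i) β := hσ hij
  rcases hv (σ i) (σ j) (σ.injective.ne hij.ne) with h | h
  · exact absurd (hβ β le_rfl _ _ h) hβ_lt.asymm
  · exact hβ γ hβγ _ _ h

/-- (Ostrowski/Kaplansky) Given `α₁,…,α_m` in an ordered abelian group `Γ`,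
a subset `Υ ⊆ Γ` without maximal element, and distinct integers `t₁,…,t_m`,
there are `β ∈ Υ` and a permutation `σ` of the indices such that for all
`γ ∈ Υ` with `γ ≥ β` the values `α_{σ(i)} + t_{σ(i)}γ` are strictly decreasing
in `i`. -/
theorem ostrowski_lemma {Γ : Type*} [AddCommGroup Γ] [LinearOrder Γ] [IsOrderedAddMonoid Γ] (m : ℕ)
    (α : Fin m → Γ) (t : Fin m → ℤ) (ht : Function.Injective t)
    (Υ : Set Γ) (hne : Υ.Nonempty) (hnomax : ∀ γ ∈ Υ, ∃ δ ∈ Υ, γ < δ) :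
    ∃ β ∈ Υ, ∃ σ : Equiv.Perm (Fin m), ∀ γ ∈ Υ, β ≤ γ →
      ∀ i j : Fin m, i < j →
        α (σ j) + t (σ j) • γ < α (σ i) + t (σ i) • γ := by
  have : Nonempty Υ := hne.to_subtype
  have : NoMaxOrder Υ := ⟨fun γ => by
    obtain ⟨δ, hδ, hγδ⟩ := hnomax γ γ.2
    exact ⟨⟨δ, hδ⟩, hγδ⟩⟩
  obtain ⟨β, σ, hσ⟩ := exists_perm_forall_ge_strictAnti (fun i (γ : Υ) => α i + t i • (γ : Γ))
    fun i j hij =>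
      eventually_lt_or_eventually_gt_of_slope_ne (Subtype.strictMono_coe _) _ _ (ht.ne hij)
  exact ⟨β, β.2, σ, fun γ hγ hβγ i j hij => hσ ⟨γ, hγ⟩ hβγ hij⟩
end

section
/- Let A be a nonempty non-trivial approximation type over (K,v). Then A is residue-extending if and only if there exists δ ∈ supp A such that ⋂A = A_δ and A°_δ = ∅; in that case δ is the maximal element of supp A. Moreover, every non-trivial approximation type is exactly one of: immediate, value-extending, or residue-extending. -/
variable {L : Type*} [Field L] {Γ : Type*} [AddCommGroup Γ] [LinearOrder Γ] [IsOrderedAddMonoid Γ]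

/-- An (abstract) approximation type over `(K,v)`: a full nest of closed and open
ultrametric balls of `K`, encoded by the (possibly empty) closed ball `closedB γ`
and open ball `openB γ` of each radius `γ ∈ vK ∪ {∞}`. -/
structure ApproxType (K : Subfield L) (v : AddValuation L (WithTop Γ)) where
  closedB : WithTop Γ → Set L
  openB : WithTop Γ → Set L
  closed_ball : ∀ γ, (closedB γ).Nonempty →
    (∃ c ∈ K, v c = γ) ∧ ∀ b ∈ closedB γ, closedB γ = {a : L | a ∈ K ∧ γ ≤ v (a - b)}
  open_ball : ∀ γ, (openB γ).Nonempty →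
    (∃ c ∈ K, v c = γ) ∧ γ ≠ ⊤ ∧
      ∀ b ∈ openB γ, openB γ = {a : L | a ∈ K ∧ γ < v (a - b)}
  open_subset_closed : ∀ γ, openB γ ⊆ closedB γ
  full_closed : ∀ γ δ, γ ≤ δ → (∃ c ∈ K, v c = γ) → (closedB δ).Nonempty →
    closedB δ ⊆ closedB γ
  full_open : ∀ γ δ, γ < δ → γ ≠ ⊤ → (∃ c ∈ K, v c = γ) → (closedB δ).Nonempty →
    closedB δ ⊆ openB γ

namespace ApproxType

variable {K : Subfield L} {v : AddValuation L (WithTop Γ)}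

def supp (A : ApproxType K v) : Set (WithTop Γ) := {γ | (A.closedB γ).Nonempty}

/-- The intersection of all balls of `A`. -/
def inter (A : ApproxType K v) : Set L :=
  (⋂ γ ∈ A.supp, A.closedB γ) ∩ (⋂ γ ∈ {γ | (A.openB γ).Nonempty}, A.openB γ)

/-- `A` is trivial: `∞ ∈ supp A`. -/
def IsTrivial (A : ApproxType K v) : Prop := (⊤ : WithTop Γ) ∈ A.supp

/-- `A` is immediate: nonempty with empty total intersection. -/
def Immediate (A : ApproxType K v) : Prop := A.supp.Nonempty ∧ A.inter = ∅

/-- `A` is value-extending: `⋂A ≠ ∅` and `A°_γ ≠ ∅` for every `γ ∈ supp A`. -/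
def ValueExt (A : ApproxType K v) : Prop :=
  A.inter.Nonempty ∧ ∀ γ ∈ A.supp, (A.openB γ).Nonempty

/-- `A` is residue-extending: `⋂A ≠ ∅` and every `c ∈ K` lies in some
`A_γ \ A°_γ` with `γ ∈ supp A`. -/
def ResidueExt (A : ApproxType K v) : Prop :=
  A.inter.Nonempty ∧ ∀ c ∈ K, ∃ γ ∈ A.supp, c ∈ A.closedB γ ∧ c ∉ A.openB γ

end ApproxType

/-!
If `A°_δ = ∅` for some `δ ∈ supp A`, fullness of the nest (every nonempty ball of radius
`> δ` would lie in `A°_δ`) makes `δ` the largest radius, so `⋂A = A_δ`; a `c ∈ K` outside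
`A_δ` then lies on the sphere of radius `v (c - b)` around any `b ∈ A_δ`, i.e. in
`A_γ \ A°_γ` for `γ = v (c - b)`. Conversely, a point `b ∈ ⋂A` lies in `K`, hence in some
`A_δ \ A°_δ`; as `b` lies in every nonempty open ball of `A`, this forces `A°_δ = ∅`.
-/

namespace ApproxType

variable {K : Subfield L} {v : AddValuation L (WithTop Γ)} {A : ApproxType K v}

lemma mem_of_mem_closedB {γ : WithTop Γ} {b : L} (hb : b ∈ A.closedB γ) : b ∈ K := by
  have hball := (A.closed_ball γ ⟨b, hb⟩).2 b hb
  rw [hball] at hb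
  exact hb.1

lemma le_of_openB_eq_empty (hnt : ¬A.IsTrivial) {δ : WithTop Γ} (hδ : δ ∈ A.supp)
    (hopen : A.openB δ = ∅) {γ : WithTop Γ} (hγ : γ ∈ A.supp) : γ ≤ δ := by
  by_contra! hlt
  have hδtop : δ ≠ ⊤ := by rintro rfl; exact hnt hδ
  have hsub := A.full_open δ γ hlt hδtop (A.closed_ball δ hδ).1 hγ
  simpa [hopen] using hγ.mono hsub

lemma inter_eq_closedB_of_openB_eq_empty (hnt : ¬A.IsTrivial) {δ : WithTop Γ}
    (hδ : δ ∈ A.supp) (hopen : A.openB δ = ∅) : A.inter = A.closedB δ := by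
  refine (Set.Subset.antisymm (fun x hx => Set.mem_iInter₂.1 hx.1 δ hδ) fun x hx => ⟨?_, ?_⟩)
  · refine Set.mem_iInter₂.2 fun γ hγ => ?_
    exact A.full_closed γ δ (le_of_openB_eq_empty hnt hδ hopen hγ) (A.closed_ball γ hγ).1 hδ hx
  · refine Set.mem_iInter₂.2 fun γ (hγ : (A.openB γ).Nonempty) => ?_
    have hle := le_of_openB_eq_empty hnt hδ hopen (hγ.mono (A.open_subset_closed γ))
    have hne : γ ≠ δ := by rintro rfl; simp [hopen] at hγ
    obtain ⟨hK, htop, -⟩ := A.open_ball γ hγ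
    exact A.full_open γ δ (hle.lt_of_ne hne) htop hK hδ hx

lemma residueExt_of_openB_eq_empty (hnt : ¬A.IsTrivial) {δ : WithTop Γ}
    (hδ : δ ∈ A.supp) (hopen : A.openB δ = ∅) : A.ResidueExt := by
  refine ⟨inter_eq_closedB_of_openB_eq_empty hnt hδ hopen ▸ hδ, fun c hc => ?_⟩
  by_cases hcδ : c ∈ A.closedB δ
  · exact ⟨δ, hδ, hcδ, by simp [hopen]⟩
  obtain ⟨b, hb⟩ := id hδ
  set γ := v (c - b)
  have hγδ : γ < δ := by
    by_contra! hle
    exact hcδ ((A.closed_ball δ hδ).2 b hb ▸ ⟨hc, hle⟩)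
  have hγK : ∃ x ∈ K, v x = γ := ⟨c - b, K.sub_mem hc (mem_of_mem_closedB hb), rfl⟩
  have hbγ : b ∈ A.closedB γ := A.full_closed γ δ hγδ.le hγK hδ hb
  have hbγ' : b ∈ A.openB γ := A.full_open γ δ hγδ (hγδ.trans_le le_top).ne hγK hδ hb
  refine ⟨γ, ⟨b, hbγ⟩, (A.closed_ball γ ⟨b, hbγ⟩).2 b hbγ ▸ ⟨hc, le_rfl⟩, fun hco => ?_⟩
  rw [(A.open_ball γ ⟨b, hbγ'⟩).2.2 b hbγ'] at hco
  exact lt_irrefl γ hco.2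

lemma ResidueExt.exists_openB_eq_empty (h : A.ResidueExt) :
    ∃ δ ∈ A.supp, A.openB δ = ∅ := by
  obtain ⟨⟨b, hb⟩, hsphere⟩ := h
  obtain ⟨γ, hγ, -⟩ := hsphere 0 K.zero_mem
  obtain ⟨δ, hδ, -, hbδ⟩ := hsphere b (mem_of_mem_closedB (Set.mem_iInter₂.1 hb.1 γ hγ))
  refine ⟨δ, hδ, Set.not_nonempty_iff_eq_empty.1 fun hopen => ?_⟩
  exact hbδ (Set.mem_iInter₂.1 hb.2 δ hopen)

lemma ResidueExt.not_valueExt (h : A.ResidueExt) : ¬A.ValueExt := by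
  rintro ⟨-, hopen⟩
  obtain ⟨δ, hδ, hempty⟩ := h.exists_openB_eq_empty
  simpa [hempty] using hopen δ hδ

lemma Immediate.not_inter_nonempty (h : A.Immediate) : ¬A.inter.Nonempty := by
  simp [h.2]

lemma immediate_or_valueExt_or_residueExt (hne : A.supp.Nonempty) (hnt : ¬A.IsTrivial) :
    A.Immediate ∨ A.ValueExt ∨ A.ResidueExt := by
  rcases Set.eq_empty_or_nonempty A.inter with hempty | hinter
  · exact .inl ⟨hne, hempty⟩
  by_cases hopen : ∀ γ ∈ A.supp, (A.openB γ).Nonempty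
  · exact .inr (.inl ⟨hinter, hopen⟩)
  push Not at hopen
  obtain ⟨δ, hδ, hempty⟩ := hopen
  exact .inr (.inr (residueExt_of_openB_eq_empty hnt hδ hempty))

end ApproxType

open ApproxType in
/-- For a nonempty non-trivial approximation type `A`: `A` is residue-extending
iff there is `δ ∈ supp A` with `⋂A = A_δ` and `A°_δ = ∅`, in which case `δ` is
the maximal element of `supp A`. Moreover, `A` is exactly one of: immediate,
value-extending, residue-extending. -/
theorem residueExt_iff_and_trichotomy (K : Subfield L)
    (v : AddValuation L (WithTop Γ)) (A : ApproxType K v)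
    (hne : A.supp.Nonempty) (hnt : ¬ A.IsTrivial) :
    (A.ResidueExt ↔
      ∃ δ ∈ A.supp, A.inter = A.closedB δ ∧ A.openB δ = ∅ ∧ ∀ γ ∈ A.supp, γ ≤ δ) ∧
    (A.Immediate ∨ A.ValueExt ∨ A.ResidueExt) ∧
    ¬(A.Immediate ∧ A.ValueExt) ∧ ¬(A.Immediate ∧ A.ResidueExt) ∧
    ¬(A.ValueExt ∧ A.ResidueExt) := by
  refine ⟨⟨fun h => ?_, fun ⟨δ, hδ, _, hopen, _⟩ => residueExt_of_openB_eq_empty hnt hδ hopen⟩,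
    immediate_or_valueExt_or_residueExt hne hnt,
    fun ⟨hi, hv⟩ => hi.not_inter_nonempty hv.1, fun ⟨hi, hr⟩ => hi.not_inter_nonempty hr.1,
    fun ⟨hv, hr⟩ => hr.not_valueExt hv⟩
  obtain ⟨δ, hδ, hopen⟩ := h.exists_openB_eq_empty
  exact ⟨δ, hδ, inter_eq_closedB_of_openB_eq_empty hnt hδ hopen, hopen,
    fun γ hγ => le_of_openB_eq_empty hnt hδ hopen hγ⟩
end

section
/- Let (K(x)|K,v) be a valued field extension and A := appr_v(x,K). Then A is value-extending if and only if there exists b ∈ K with v(x−b) ∉ vK. In this case supp A = v(x−K) ∩ vK = {γ ∈ vK : γ < v(x−b)}, and ⋂A is exactly the set of b ∈ K with v(x−b) ∉ vK. -/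
variable {L : Type*} [Field L] {Γ : Type*} [AddCommGroup Γ] [LinearOrder Γ] [IsOrderedAddMonoid Γ]

/-- `⋂A` for `A = appr_v(x,K)`: the elements of `K` lying in every nonempty
closed and open ball of the approximation type of `x`. -/
def interAppr (K : Subfield L) (v : AddValuation L (WithTop Γ)) (x : L) : Set L :=
  {b | b ∈ K ∧ (∀ γ ∈ valSet K v, (∃ c ∈ K, γ ≤ v (x - c)) → γ ≤ v (x - b)) ∧
    (∀ γ ∈ valSet K v, (∃ c ∈ K, γ < v (x - c)) → γ < v (x - b))}

/-- `A = appr_v(x,K)` is value-extending: `⋂A ≠ ∅` and each open ball at a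
radius of the support is nonempty. -/
def ValueExtAppr (K : Subfield L) (v : AddValuation L (WithTop Γ)) (x : L) : Prop :=
  (interAppr K v x).Nonempty ∧
  ∀ γ ∈ valSet K v, (∃ c ∈ K, γ ≤ v (x - c)) → ∃ c ∈ K, γ < v (x - c)

/-!
If `v(x - b) ∉ vK` for some `b ∈ K`, then `b` is a best approximation of `x` in `K`: were
`v(x - b) < v(x - c)`, the ultrametric equality would give `v(b - c) = v(x - b) ∈ vK`.
Every `γ ∈ vK` below `v(x - b)` is then attained as `v(x - (b + d))` with `v d = γ`.
Conversely, an element `b ∈ ⋂A` with `v(x - b) ∈ vK` would have to lie in the open ball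
of radius `v(x - b)`, which is absurd.
-/

section ApproximationType

variable {K : Subfield L} {v : AddValuation L (WithTop Γ)} {x b c : L}

theorem valuation_sub_le_of_notMem_valSet (hb : b ∈ K) (hxb : v (x - b) ∉ valSet K v)
    (hc : c ∈ K) : v (x - c) ≤ v (x - b) := by
  by_contra! hlt
  have hbc : v (b - c) = v (x - b) := by
    rw [← sub_sub_sub_cancel_left c b x, AddValuation.map_sub_eq_of_lt_right _ hlt]
  exact hxb ⟨b - c, sub_mem hb hc, hbc⟩

theorem mem_vxK_of_lt (hb : b ∈ K) {γ : WithTop Γ} (hγ : γ ∈ valSet K v)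
    (hlt : γ < v (x - b)) : γ ∈ vxK K v x := by
  obtain ⟨d, hd, rfl⟩ := hγ
  refine ⟨b + d, add_mem hb hd, ?_⟩
  rw [← sub_sub, AddValuation.map_sub_eq_of_lt_right _ hlt]

theorem valuation_sub_le_of_mem_interAppr (hb : b ∈ interAppr K v x)
    (hxb : v (x - b) ∈ valSet K v) (hc : c ∈ K) : v (x - c) ≤ v (x - b) := by
  by_contra! hlt
  exact lt_irrefl _ (hb.2.2 _ hxb ⟨c, hc, hlt⟩)

theorem mem_interAppr_of_notMem_valSet (hb : b ∈ K) (hxb : v (x - b) ∉ valSet K v) :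
    b ∈ interAppr K v x :=
  ⟨hb, fun _ _ ⟨_, hc, hle⟩ => hle.trans (valuation_sub_le_of_notMem_valSet hb hxb hc),
    fun _ _ ⟨_, hc, hlt⟩ => hlt.trans_le (valuation_sub_le_of_notMem_valSet hb hxb hc)⟩

theorem suppAppr_eq_of_notMem_valSet (hb : b ∈ K) (hxb : v (x - b) ∉ valSet K v) :
    suppAppr K v x = {γ | γ ∈ valSet K v ∧ γ < v (x - b)} := by
  ext γ
  constructor
  · rintro ⟨hγ, c, hc, hle⟩
    exact ⟨hγ, (hle.trans (valuation_sub_le_of_notMem_valSet hb hxb hc)).lt_of_ne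
      (ne_of_mem_of_not_mem hγ hxb)⟩
  · rintro ⟨hγ, hlt⟩
    exact ⟨hγ, b, hb, hlt.le⟩

theorem suppAppr_eq_vxK_inter_valSet (hb : b ∈ K) (hxb : v (x - b) ∉ valSet K v) :
    suppAppr K v x = vxK K v x ∩ valSet K v := by
  ext γ
  constructor
  · intro hγ
    obtain ⟨hγK, hlt⟩ : γ ∈ {γ | γ ∈ valSet K v ∧ γ < v (x - b)} :=
      suppAppr_eq_of_notMem_valSet hb hxb ▸ hγ
    exact ⟨mem_vxK_of_lt hb hγK hlt, hγK⟩
  · rintro ⟨⟨c, hc, rfl⟩, hγK⟩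
    exact ⟨hγK, c, hc, le_rfl⟩

theorem interAppr_eq_of_notMem_valSet (hb : b ∈ K) (hxb : v (x - b) ∉ valSet K v) :
    interAppr K v x = {b' : L | b' ∈ K ∧ v (x - b') ∉ valSet K v} := by
  ext b'
  refine ⟨fun hb' => ⟨hb'.1, fun hxb' => hxb ?_⟩,
    fun ⟨hb'K, hxb'⟩ => mem_interAppr_of_notMem_valSet hb'K hxb'⟩
  have hbb' : v (x - b) = v (x - b') :=
    (valuation_sub_le_of_mem_interAppr hb' hxb' hb).antisymm
      (valuation_sub_le_of_notMem_valSet hb hxb hb'.1)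
  exact hbb' ▸ hxb'

theorem valueExtAppr_of_notMem_valSet (hb : b ∈ K) (hxb : v (x - b) ∉ valSet K v) :
    ValueExtAppr K v x := by
  refine ⟨⟨b, mem_interAppr_of_notMem_valSet hb hxb⟩, fun γ hγ hsupp => ⟨b, hb, ?_⟩⟩
  have hγ' : γ ∈ suppAppr K v x := ⟨hγ, hsupp⟩
  rw [suppAppr_eq_of_notMem_valSet hb hxb] at hγ'
  exact hγ'.2

theorem exists_notMem_valSet_of_valueExtAppr (h : ValueExtAppr K v x) :
    ∃ b ∈ K, v (x - b) ∉ valSet K v := by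
  obtain ⟨⟨b, hb⟩, hopen⟩ := h
  refine ⟨b, hb.1, fun hxb => ?_⟩
  obtain ⟨c, hc, hlt⟩ := hopen _ hxb ⟨b, hb.1, le_rfl⟩
  exact (valuation_sub_le_of_mem_interAppr hb hxb hc).not_gt hlt

end ApproximationType

theorem valueExtAppr_iff_general (K : Subfield L) (v : AddValuation L (WithTop Γ))
    (x : L) :
    (ValueExtAppr K v x ↔ ∃ b ∈ K, v (x - b) ∉ valSet K v) ∧
    (∀ b ∈ K, v (x - b) ∉ valSet K v →
      suppAppr K v x = vxK K v x ∩ valSet K v ∧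
      suppAppr K v x = {γ | γ ∈ valSet K v ∧ γ < v (x - b)} ∧
      interAppr K v x = {b' : L | b' ∈ K ∧ v (x - b') ∉ valSet K v}) :=
  ⟨⟨exists_notMem_valSet_of_valueExtAppr,
      fun ⟨_, hb, hxb⟩ => valueExtAppr_of_notMem_valSet hb hxb⟩,
    fun _ hb hxb => ⟨suppAppr_eq_vxK_inter_valSet hb hxb, suppAppr_eq_of_notMem_valSet hb hxb,
      interAppr_eq_of_notMem_valSet hb hxb⟩⟩

/-- `A := appr_v(x,K)` is value-extending iff there is `b ∈ K` with
`v(x−b) ∉ vK`; in that case `supp A = v(x−K) ∩ vK = {γ ∈ vK : γ < v(x−b)}` and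
`⋂A = {b ∈ K : v(x−b) ∉ vK}`. -/
theorem valueExtAppr_iff (K : Subfield L) (v : AddValuation L (WithTop Γ))
    (x : L) (hx : x ∉ K) :
    (ValueExtAppr K v x ↔ ∃ b ∈ K, v (x - b) ∉ valSet K v) ∧
    (∀ b ∈ K, v (x - b) ∉ valSet K v →
      suppAppr K v x = vxK K v x ∩ valSet K v ∧
      suppAppr K v x = {γ | γ ∈ valSet K v ∧ γ < v (x - b)} ∧
      interAppr K v x = {b' : L | b' ∈ K ∧ v (x - b') ∉ valSet K v}) :=
  valueExtAppr_iff_general K v x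
end

section
/- Let (K(x)|K,v) be a valued field extension and A := appr_v(x,K). Then A is residue-extending if and only if there exist b, d ∈ K with v(d(x−b)) = 0 and the residue of d(x−b) not lying in Kv. In this case supp A = v(x−K) = {γ ∈ vK : γ ≤ v(x−b)}, and ⋂A is the set of all b ∈ K with v(x−b) = max supp A. -/
/-! Both conditions say that `v(x − K)` has a maximum `v(x − b)` and that it lies in `vK`.
If `v e = v(x − b)` with `e ∈ K`, a lift `a ∈ K` of the residue of `(x − b)/e` would make
`b + e a` a strictly better approximation; conversely a better approximation `c` yields the lift
`(c − b)/e`. On the side of `A`, a point of `⋂A` is a best approximation, and `c ∈ A_γ \ A°_γ`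
forces `γ = v(x − c) ∈ vK`. Once the maximum exists, every `v(x − c)` below it equals `v(b − c)`,
which gives the descriptions of `supp A` and `⋂A`. -/

variable {L : Type*} [Field L] {Γ : Type*} [AddCommGroup Γ] [LinearOrder Γ] [IsOrderedAddMonoid Γ]

/-- `A = appr_v(x,K)` is residue-extending: `⋂A ≠ ∅` and every `c ∈ K` lies in
`A_γ \ A°_γ` for some `γ` in the support. -/
def ResidueExtAppr (K : Subfield L) (v : AddValuation L (WithTop Γ)) (x : L) : Prop :=
  (interAppr K v x).Nonempty ∧
  ∀ c ∈ K, ∃ γ ∈ valSet K v,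
    (∃ c' ∈ K, γ ≤ v (x - c')) ∧ γ ≤ v (x - c) ∧ ¬ γ < v (x - c)

section

variable {K : Subfield L} {v : AddValuation L (WithTop Γ)} {x b : L}

lemma mem_valSet_iff_exists_val_mul_eq_zero {y : L} (hy : y ≠ 0) :
    v y ∈ valSet K v ↔ ∃ d ∈ K, v (d * y) = 0 := by
  constructor
  · rintro ⟨e, he, hve⟩
    have he0 : e ≠ 0 := v.ne_top_iff.mp (hve ▸ v.ne_top_iff.mpr hy)
    refine ⟨e⁻¹, K.inv_mem he, ?_⟩
    rw [v.map_mul, ← hve, ← v.map_mul, inv_mul_cancel₀ he0, v.map_one]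
  · rintro ⟨d, hd, h0⟩
    have hd0 : d ≠ 0 := left_ne_zero_of_mul (v.ne_top_iff.mp (h0 ▸ WithTop.zero_ne_top))
    refine ⟨d⁻¹, K.inv_mem hd, ?_⟩
    rw [← add_zero (v d⁻¹), ← h0, ← v.map_mul, inv_mul_cancel_left₀ hd0]

lemma not_residueInK_iff_forall_le {d : L} (hb : b ∈ K) (hd : d ∈ K)
    (h0 : v (d * (x - b)) = 0) :
    ¬ residueInK K v (d * (x - b)) ↔ ∀ c ∈ K, v (x - c) ≤ v (x - b) := by
  have hd0 : d ≠ 0 := left_ne_zero_of_mul (v.ne_top_iff.mp (h0 ▸ WithTop.zero_ne_top))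
  have hvd : v d ≠ ⊤ := v.ne_top_iff.mpr hd0
  constructor
  · intro hres c hc
    by_contra! hlt
    refine hres ⟨d * (c - b), K.mul_mem hd (K.sub_mem hc hb), ?_⟩
    rw [show d * (x - b) - d * (c - b) = d * (x - c) by ring, v.map_mul, ← h0, v.map_mul]
    exact WithTop.add_lt_add_left hvd hlt
  · rintro hmax ⟨a, ha, hpos⟩
    rw [show d * (x - b) - a = d * (x - (b + a / d)) by field_simp; ring, v.map_mul] at hpos
    have hle : v d + v (x - (b + a / d)) ≤ 0 := by
      rw [← h0, v.map_mul]
      gcongr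
      exact hmax _ (K.add_mem hb (K.div_mem ha hd))
    exact hpos.not_ge hle

lemma exists_not_residueInK_iff (hx : x ∉ K) :
    (∃ b ∈ K, ∃ d ∈ K, v (d * (x - b)) = 0 ∧ ¬ residueInK K v (d * (x - b))) ↔
      ∃ b ∈ K, v (x - b) ∈ valSet K v ∧ ∀ c ∈ K, v (x - c) ≤ v (x - b) := by
  refine exists_congr fun b => and_congr_right fun hb => ?_
  have hxb : x - b ≠ 0 := sub_ne_zero.mpr (ne_of_mem_of_not_mem hb hx).symm
  rw [mem_valSet_iff_exists_val_mul_eq_zero hxb]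
  constructor
  · rintro ⟨d, hd, h0, hres⟩
    exact ⟨⟨d, hd, h0⟩, (not_residueInK_iff_forall_le hb hd h0).mp hres⟩
  · rintro ⟨⟨d, hd, h0⟩, hmax⟩
    exact ⟨d, hd, h0, (not_residueInK_iff_forall_le hb hd h0).mpr hmax⟩

lemma val_sub_mem_valSet_of_le {c : L} (hb : b ∈ K) (hval : v (x - b) ∈ valSet K v)
    (hc : c ∈ K) (hle : v (x - c) ≤ v (x - b)) : v (x - c) ∈ valSet K v := by
  rcases hle.lt_or_eq with hlt | heq
  · refine ⟨b - c, K.sub_mem hb hc, ?_⟩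
    rw [show b - c = (x - c) - (x - b) by ring, v.map_sub_eq_of_lt_left hlt]
  · exact heq ▸ hval

lemma mem_interAppr_of_forall_le (hb : b ∈ K) (hmax : ∀ c ∈ K, v (x - c) ≤ v (x - b)) :
    b ∈ interAppr K v x :=
  ⟨hb, fun _ _ ⟨c, hc, hle⟩ => hle.trans (hmax c hc),
    fun _ _ ⟨c, hc, hlt⟩ => hlt.trans_le (hmax c hc)⟩

lemma residueExtAppr_iff_exists_max :
    ResidueExtAppr K v x ↔ ∃ b ∈ K, v (x - b) ∈ valSet K v ∧ ∀ c ∈ K, v (x - c) ≤ v (x - b) := by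
  constructor
  · rintro ⟨⟨b, hb, hle, -⟩, hall⟩
    have hval : ∀ c ∈ K, v (x - c) ∈ valSet K v := fun c hc => by
      obtain ⟨γ, hγ, -, hγle, hγnlt⟩ := hall c hc
      rwa [← le_antisymm hγle (not_lt.mp hγnlt)]
    exact ⟨b, hb, hval b hb, fun c hc => hle _ (hval c hc) ⟨c, hc, le_rfl⟩⟩
  · rintro ⟨b, hb, hval, hmax⟩
    exact ⟨⟨b, mem_interAppr_of_forall_le hb hmax⟩, fun c hc =>
      ⟨_, val_sub_mem_valSet_of_le hb hval hc (hmax c hc), ⟨c, hc, le_rfl⟩, le_rfl, lt_irrefl _⟩⟩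

lemma suppAppr_eq_of_forall_le (hb : b ∈ K) (hmax : ∀ c ∈ K, v (x - c) ≤ v (x - b)) :
    suppAppr K v x = {γ | γ ∈ valSet K v ∧ γ ≤ v (x - b)} := by
  ext γ
  exact ⟨fun ⟨hγ, c, hc, hle⟩ => ⟨hγ, hle.trans (hmax c hc)⟩, fun ⟨hγ, hle⟩ => ⟨hγ, b, hb, hle⟩⟩

lemma suppAppr_eq_vxK_of_forall_le (hb : b ∈ K) (hmax : ∀ c ∈ K, v (x - c) ≤ v (x - b))
    (hval : v (x - b) ∈ valSet K v) :
    suppAppr K v x = vxK K v x := by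
  rw [suppAppr_eq_of_forall_le hb hmax]
  ext γ
  constructor
  · rintro ⟨⟨e, he, rfl⟩, hle⟩
    rcases hle.lt_or_eq with hlt | heq
    · refine ⟨b - e, K.sub_mem hb he, ?_⟩
      rw [show x - (b - e) = (x - b) + e by ring, v.map_add_eq_of_lt_right hlt]
    · exact ⟨b, hb, heq.symm⟩
  · rintro ⟨c, hc, rfl⟩
    exact ⟨val_sub_mem_valSet_of_le hb hval hc (hmax c hc), hmax c hc⟩

lemma interAppr_eq_of_forall_le (hb : b ∈ K) (hmax : ∀ c ∈ K, v (x - c) ≤ v (x - b))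
    (hval : v (x - b) ∈ valSet K v) :
    interAppr K v x = {b' : L | b' ∈ K ∧ v (x - b') = v (x - b)} := by
  ext b'
  constructor
  · rintro ⟨hb', -, hlt⟩
    refine ⟨hb', (hmax b' hb').antisymm (not_lt.mp fun h => ?_)⟩
    exact lt_irrefl _ <| hlt _ (val_sub_mem_valSet_of_le hb hval hb' (hmax b' hb')) ⟨b, hb, h⟩
  · rintro ⟨hb', heq⟩
    exact mem_interAppr_of_forall_le hb' (heq ▸ hmax)

end

/-- `A := appr_v(x,K)` is residue-extending iff there are `b, d ∈ K` with
`v(d(x−b)) = 0` and the residue of `d(x−b)` not in `Kv`; in that case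
`supp A = v(x−K) = {γ ∈ vK : γ ≤ v(x−b)}` and `⋂A` is the set of all `b' ∈ K`
with `v(x−b') = max supp A = v(x−b)`. -/
theorem residueExtAppr_iff (K : Subfield L) (v : AddValuation L (WithTop Γ))
    (x : L) (hx : x ∉ K) :
    (ResidueExtAppr K v x ↔
      ∃ b ∈ K, ∃ d ∈ K, v (d * (x - b)) = 0 ∧ ¬ residueInK K v (d * (x - b))) ∧
    (∀ b ∈ K, ∀ d ∈ K, v (d * (x - b)) = 0 → ¬ residueInK K v (d * (x - b)) →
      suppAppr K v x = vxK K v x ∧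
      suppAppr K v x = {γ | γ ∈ valSet K v ∧ γ ≤ v (x - b)} ∧
      interAppr K v x = {b' : L | b' ∈ K ∧ v (x - b') = v (x - b)}) := by
  refine ⟨residueExtAppr_iff_exists_max.trans (exists_not_residueInK_iff hx).symm, ?_⟩
  intro b hb d hd h0 hres
  have hmax := (not_residueInK_iff_forall_le hb hd h0).mp hres
  have hval : v (x - b) ∈ valSet K v :=
    (mem_valSet_iff_exists_val_mul_eq_zero
      (sub_ne_zero.mpr (ne_of_mem_of_not_mem hb hx).symm)).mpr ⟨d, hd, h0⟩
  exact ⟨suppAppr_eq_vxK_of_forall_le hb hmax hval, suppAppr_eq_of_forall_le hb hmax,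
    interAppr_eq_of_forall_le hb hmax hval⟩
end
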